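/- arXiv:1409.7274 — 3 statements merged into one kernel-verified Lean document; each statement's English description precedes it below -/
import Mathlib

section
/- Let 𝒞 be a triangulated category with a proper class ξ of triangles and enough ξ-projectives. A distinguished triangle A → B → C → ΣA belongs to ξ if and only if for every ξ-projective object P, the induced sequence 0 → Hom(P,A) → Hom(P,B) → Hom(P,C) → 0 of abelian groups is exact. -/
open CategoryTheory CategoryTheory.Limits CategoryTheory.Pretriangulated

namespace GorensteinTriangulated

variable {C : Type*} [Category C] [HasZeroObject C] [HasShift C ℤ] [Preadditive C]
  [∀ n : ℤ, (shiftFunctor C n).Additive] [Pretriangulated C]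

/-- A triangle `A ⟶ B ⟶ C ⟶ ΣA` is split if it is isomorphic to the triangle
`A ⟶ A ⊞ C ⟶ C ⟶ ΣA` with structure maps `(1 0)`, `(0 1)ᵀ` and `0`. -/
def IsSplitTriangle (T : Triangle C) : Prop :=
  Nonempty (T ≅ Triangle.mk (biprod.inl : T.obj₁ ⟶ T.obj₁ ⊞ T.obj₃) biprod.snd
    (0 : T.obj₃ ⟶ T.obj₁⟦(1 : ℤ)⟧))

/-- The triangle `T` becomes a short exact sequence after applying `Hom(Q, -)`. -/
def CoExact (T : Triangle C) (Q : C) : Prop :=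
  Function.Injective (fun φ : Q ⟶ T.obj₁ => φ ≫ T.mor₁) ∧
  (∀ φ : Q ⟶ T.obj₂, φ ≫ T.mor₂ = 0 → ∃ ψ : Q ⟶ T.obj₁, φ = ψ ≫ T.mor₁) ∧
  Function.Surjective (fun φ : Q ⟶ T.obj₂ => φ ≫ T.mor₂)

/-- The triangle `T` becomes a short exact sequence after applying `Hom(-, Q)`. -/
def ContraExact (T : Triangle C) (Q : C) : Prop :=
  Function.Injective (fun φ : T.obj₃ ⟶ Q => T.mor₂ ≫ φ) ∧
  (∀ φ : T.obj₂ ⟶ Q, T.mor₁ ≫ φ = 0 → ∃ ψ : T.obj₃ ⟶ Q, φ = T.mor₂ ≫ ψ) ∧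
  Function.Surjective (fun φ : T.obj₂ ⟶ Q => T.mor₁ ≫ φ)

/-- Saturation of a class of triangles with respect to base change: in a base change
diagram, if the third vertical triangle and the second horizontal triangle are in `S`,
then the original triangle is in `S`. -/
def SaturatedBase (S : Set (Triangle C)) : Prop :=
  ∀ T ∈ (distinguishedTriangles : Set (Triangle C)),
    ∀ (M G E : C) (α : M ⟶ G) (δ : M ⟶ E) (f' : T.obj₁ ⟶ G) (g' : G ⟶ E)
      (h' : E ⟶ T.obj₁⟦(1 : ℤ)⟧) (β : G ⟶ T.obj₂) (ε : E ⟶ T.obj₃)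
      (γ : T.obj₂ ⟶ M⟦(1 : ℤ)⟧) (ζ : T.obj₃ ⟶ M⟦(1 : ℤ)⟧),
      Triangle.mk α β γ ∈ (distinguishedTriangles : Set (Triangle C)) →
      Triangle.mk f' g' h' ∈ S → Triangle.mk δ ε ζ ∈ S →
      α ≫ g' = δ → f' ≫ β = T.mor₁ → g' ≫ ε = β ≫ T.mor₂ → h' = ε ≫ T.mor₃ →
      T.mor₂ ≫ ζ = γ → T ∈ S

/-- Saturation of a class of triangles with respect to cobase change: in a cobase change
diagram, if the second vertical triangle and the third horizontal triangle are in `S`,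
then the original triangle is in `S`. -/
def SaturatedCobase (S : Set (Triangle C)) : Prop :=
  ∀ T ∈ (distinguishedTriangles : Set (Triangle C)),
    ∀ (N D F : C) (ζ : N ⟶ T.obj₁) (δ : N ⟶ T.obj₂) (α : T.obj₁ ⟶ D) (β : T.obj₂ ⟶ F)
      (f' : D ⟶ F) (g' : F ⟶ T.obj₃) (h' : T.obj₃ ⟶ D⟦(1 : ℤ)⟧)
      (η : D ⟶ N⟦(1 : ℤ)⟧) (υ : F ⟶ N⟦(1 : ℤ)⟧),
      Triangle.mk ζ α η ∈ (distinguishedTriangles : Set (Triangle C)) →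
      Triangle.mk δ β υ ∈ S → Triangle.mk f' g' h' ∈ S →
      ζ ≫ T.mor₁ = δ → T.mor₁ ≫ β = α ≫ f' → T.mor₂ = β ≫ g' →
      T.mor₃ ≫ (shiftFunctor C (1 : ℤ)).map α = h' → f' ≫ υ = η → T ∈ S

/-- A proper class of triangles in the sense of Beligiannis. -/
structure IsProperClass (S : Set (Triangle C)) : Prop where
  subset_dist : S ⊆ (distinguishedTriangles : Set (Triangle C))
  split_mem : ∀ T : Triangle C, T ∈ (distinguishedTriangles : Set (Triangle C)) →
    IsSplitTriangle T → T ∈ S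
  iso_closed : ∀ T₁ T₂ : Triangle C, Nonempty (T₁ ≅ T₂) → T₁ ∈ S → T₂ ∈ S
  sum_closed : ∀ T₁ ∈ S, ∀ T₂ ∈ S, ∀ T ∈ (distinguishedTriangles : Set (Triangle C)),
    Nonempty (T.obj₁ ≅ T₁.obj₁ ⊞ T₂.obj₁) →
    (∀ e₁ : T.obj₁ ≅ T₁.obj₁ ⊞ T₂.obj₁, ∀ e₂ : T.obj₂ ≅ T₁.obj₂ ⊞ T₂.obj₂,
      ∀ e₃ : T.obj₃ ≅ T₁.obj₃ ⊞ T₂.obj₃,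
      T.mor₁ = e₁.hom ≫ biprod.map T₁.mor₁ T₂.mor₁ ≫ e₂.inv →
      T.mor₂ = e₂.hom ≫ biprod.map T₁.mor₂ T₂.mor₂ ≫ e₃.inv →
      T.mor₃ = e₃.hom ≫ biprod.desc
        (T₁.mor₃ ≫ (shiftFunctor C (1 : ℤ)).map (biprod.inl ≫ e₁.inv))
        (T₂.mor₃ ≫ (shiftFunctor C (1 : ℤ)).map (biprod.inr ≫ e₁.inv)) → T ∈ S)
  susp_closed : ∀ T ∈ S, ∀ i : ℤ, (Triangle.shiftFunctor C i).obj T ∈ S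
  saturated : SaturatedBase S
  base_change : ∀ T ∈ S, ∀ {E : C} (ε : E ⟶ T.obj₃),
    ∃ (G : C) (f' : T.obj₁ ⟶ G) (g' : G ⟶ E) (h' : E ⟶ T.obj₁⟦(1 : ℤ)⟧) (β : G ⟶ T.obj₂),
      Triangle.mk f' g' h' ∈ S ∧ f' ≫ β = T.mor₁ ∧ g' ≫ ε = β ≫ T.mor₂ ∧ h' = ε ≫ T.mor₃
  cobase_change : ∀ T ∈ S, ∀ {D : C} (α : T.obj₁ ⟶ D),
    ∃ (F : C) (f' : D ⟶ F) (g' : F ⟶ T.obj₃) (h' : T.obj₃ ⟶ D⟦(1 : ℤ)⟧) (β : T.obj₂ ⟶ F),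
      Triangle.mk f' g' h' ∈ S ∧ T.mor₁ ≫ β = α ≫ f' ∧ T.mor₂ = β ≫ g' ∧
      T.mor₃ ≫ (shiftFunctor C (1 : ℤ)).map α = h'

/-- `P` is a `ξ`-projective object. -/
def XiProjective (S : Set (Triangle C)) (P : C) : Prop :=
  ∀ T ∈ S, CoExact T P

/-- `𝒞` has enough `ξ`-projectives. -/
def HasEnoughXiProjectives (S : Set (Triangle C)) : Prop :=
  ∀ A : C, ∃ (K P : C) (f : K ⟶ P) (g : P ⟶ A) (h : A ⟶ K⟦(1 : ℤ)⟧),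
    XiProjective S P ∧ Triangle.mk f g h ∈ S

/-- The objects admitting a complete resolution by triangles in `S` with middle terms in
`X` which are `Hom(-, Y)`-exact; `GClass S X X` is the Gorenstein category `𝒢(X)` and
`GClass S (XiProjective S) (XiProjective S)` is the class of `ξ`-Gorenstein projectives. -/
def GClass (S : Set (Triangle C)) (X Y : C → Prop) (A : C) : Prop :=
  ∃ (K P : ℤ → C) (f : ∀ n : ℤ, K (n + 1) ⟶ P n) (g : ∀ n : ℤ, P n ⟶ K n)
    (h : ∀ n : ℤ, K n ⟶ (K (n + 1))⟦(1 : ℤ)⟧),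
    K 0 = A ∧ ∀ n : ℤ, X (P n) ∧ Triangle.mk (f n) (g n) (h n) ∈ S ∧
      ∀ Q : C, Y Q → ContraExact (Triangle.mk (f n) (g n) (h n)) Q

/-- `ξ`-Gorenstein projective objects. -/
def GProjective (S : Set (Triangle C)) (A : C) : Prop :=
  GClass S (XiProjective S) (XiProjective S) A

/-- A `ξ`-exact resolution `⋯ → X₁ → X₀ → A → 0` with terms satisfying `X`, which is
`Hom(-, Q)`-exact for every `Q` satisfying `Y`. -/
def HasResolution (S : Set (Triangle C)) (X Y : C → Prop) (A : C) : Prop :=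
  ∃ (K G : ℕ → C) (f : ∀ n : ℕ, K (n + 1) ⟶ G n) (g : ∀ n : ℕ, G n ⟶ K n)
    (h : ∀ n : ℕ, K n ⟶ (K (n + 1))⟦(1 : ℤ)⟧),
    K 0 = A ∧ ∀ n : ℕ, X (G n) ∧ Triangle.mk (f n) (g n) (h n) ∈ S ∧
      ∀ Q : C, Y Q → ContraExact (Triangle.mk (f n) (g n) (h n)) Q

/-- A `ξ`-exact coresolution `0 → A → X⁰ → X¹ → ⋯` with terms satisfying `X`, which is
`Hom(-, Q)`-exact for every `Q` satisfying `Y`. -/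
def HasCoresolution (S : Set (Triangle C)) (X Y : C → Prop) (A : C) : Prop :=
  ∃ (K G : ℕ → C) (f : ∀ n : ℕ, K n ⟶ G n) (g : ∀ n : ℕ, G n ⟶ K (n + 1))
    (h : ∀ n : ℕ, K (n + 1) ⟶ (K n)⟦(1 : ℤ)⟧),
    K 0 = A ∧ ∀ n : ℕ, X (G n) ∧ Triangle.mk (f n) (g n) (h n) ∈ S ∧
      ∀ Q : C, Y Q → ContraExact (Triangle.mk (f n) (g n) (h n)) Q

/-- A finite `ξ`-exact sequence `0 → Gₙ → ⋯ → G₀ → A → 0` where the `j`-th term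
satisfies the predicate `X j`. -/
def FiniteRes (S : Set (Triangle C)) (n : ℕ) (X : ℕ → C → Prop) (A : C) : Prop :=
  ∃ (K G : ℕ → C) (f : ∀ j : ℕ, K (j + 1) ⟶ G j) (g : ∀ j : ℕ, G j ⟶ K j)
    (h : ∀ j : ℕ, K j ⟶ (K (j + 1))⟦(1 : ℤ)⟧),
    K 0 = A ∧ IsZero (K (n + 1)) ∧
    ∀ j ≤ n, X j (G j) ∧ Triangle.mk (f j) (g j) (h j) ∈ S

/-- `ξ`-Gorenstein projective dimension of `A` is at most `n`. -/
def GpdLE (S : Set (Triangle C)) (A : C) (n : ℕ) : Prop :=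
  FiniteRes S n (fun _ => GProjective S) A

/-! If `T` is `Hom(P, -)`-exact for a `ξ`-projective cover `K → P → T.obj₃ → K⟦1⟧`, the map
`ε : P → T.obj₃` lifts to `T.obj₂`, so `ε ≫ T.mor₃ = 0`. The homotopy pullback of `T.mor₂`
along `ε` is then a base change diagram whose row `T.obj₁ → M → P` has zero third map, hence
splits and lies in `ξ`; saturation puts `T` in `ξ`. -/

lemma isSplitTriangle_of_mor₃_eq_zero {T : Triangle C} (hT : T ∈ distTriang C)
    (h : T.mor₃ = 0) : IsSplitTriangle T := by
  obtain ⟨e, he₁, he₂⟩ := exists_iso_binaryBiproduct_of_distTriang T hT h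
  exact ⟨Triangle.isoMk _ _ (Iso.refl _) e (Iso.refl _) (he₁.trans (Category.id_comp _).symm)
    ((Category.comp_id _).trans he₂) (by rw [h, zero_comp]; exact comp_zero.symm)⟩

lemma IsProperClass.mem_of_mor₃_eq_zero {S : Set (Triangle C)} (hS : IsProperClass S)
    {T : Triangle C} (hT : T ∈ distTriang C) (h : T.mor₃ = 0) : T ∈ S :=
  hS.split_mem T hT (isSplitTriangle_of_mor₃_eq_zero hT h)

variable [IsTriangulated C]

/-- The homotopy pullback of `T.mor₂` along `ε`, from the octahedral axiom for
`T.mor₂ ≫ ζ`: exactly the base change diagram that `SaturatedBase` asks for. -/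
theorem exists_baseChange_of_distTriang {T : Triangle C} (hT : T ∈ distTriang C)
    {K P : C} {δ : K ⟶ P} {ε : P ⟶ T.obj₃} {ζ : T.obj₃ ⟶ K⟦(1 : ℤ)⟧}
    (hK : Triangle.mk δ ε ζ ∈ distTriang C) :
    ∃ (M : C) (α : K ⟶ M) (β : M ⟶ T.obj₂) (f' : T.obj₁ ⟶ M) (g' : M ⟶ P),
      Triangle.mk α β (T.mor₂ ≫ ζ) ∈ distTriang C ∧
      Triangle.mk f' g' (ε ≫ T.mor₃) ∈ distTriang C ∧
      α ≫ g' = δ ∧ f' ≫ β = T.mor₁ ∧ g' ≫ ε = β ≫ T.mor₂ := by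
  obtain ⟨M, α, β, hM⟩ := distinguished_cocone_triangle₂ (T.mor₂ ≫ ζ)
  have hK' : Triangle.mk ε ζ (-δ⟦(1 : ℤ)⟧') ∈ distTriang C := rot_of_distTriang _ hK
  have hM' : Triangle.mk β (T.mor₂ ≫ ζ) (-α⟦(1 : ℤ)⟧') ∈ distTriang C := rot_of_distTriang _ hM
  let o := Triangulated.someOctahedron' rfl hT hK' hM'
  refine ⟨M, α, β, o.m₁, o.m₃, hM, o.mem, ?_, o.comm₁, o.comm₄⟩
  apply (shiftFunctor C (1 : ℤ)).map_injective
  rw [Functor.map_comp, ← neg_inj, ← Preadditive.neg_comp]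
  exact o.comm₃

theorem IsProperClass.mem_of_comp_mor₃_eq_zero {S : Set (Triangle C)} (hS : IsProperClass S)
    {T : Triangle C} (hT : T ∈ distTriang C) {K P : C} {δ : K ⟶ P} {ε : P ⟶ T.obj₃}
    {ζ : T.obj₃ ⟶ K⟦(1 : ℤ)⟧} (hK : Triangle.mk δ ε ζ ∈ S) (hε : ε ≫ T.mor₃ = 0) : T ∈ S := by
  obtain ⟨M, α, β, f', g', hM, hsplit, hαg, hfβ, hgε⟩ :=
    exists_baseChange_of_distTriang hT (hS.subset_dist hK)
  exact hS.saturated T hT K M P α δ f' g' (ε ≫ T.mor₃) β ε (T.mor₂ ≫ ζ) ζ hM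
    (hS.mem_of_mor₃_eq_zero hsplit hε) hK hαg hfβ hgε rfl rfl

theorem mem_xi_iff_coExact (S : Set (Triangle C)) (hS : IsProperClass S)
    (hE : HasEnoughXiProjectives S) (T : Triangle C)
    (hT : T ∈ (distinguishedTriangles : Set (Triangle C))) :
    T ∈ S ↔ ∀ P : C, XiProjective S P → CoExact T P := by
  refine ⟨fun hTS P hP => hP T hTS, fun hco => ?_⟩
  obtain ⟨K, P, δ, ε, ζ, hP, hK⟩ := hE T.obj₃
  obtain ⟨φ, rfl⟩ := (hco P hP).2.2 ε
  refine hS.mem_of_comp_mor₃_eq_zero hT hK ?_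
  rw [Category.assoc, comp_distTriang_mor_zero₂₃ T hT, comp_zero]

end GorensteinTriangulated
end

section
/- Let 𝒞 be a triangulated category with a proper class ξ of triangles and enough ξ-projectives, and let A be an object of 𝒞. Then A is ξ-Gorenstein projective if and only if A has both a ξ-projective resolution which is Hom(−,𝒫(ξ))-exact and a ξ-projective coresolution which is Hom(−,𝒫(ξ))-exact. -/
open CategoryTheory CategoryTheory.Limits CategoryTheory.Pretriangulated

namespace GorensteinTriangulated

variable {C : Type*} [Category C] [HasShift C ℤ]

theorem triangle_mk_eqToHom_comp {X X' Y Z : C} (e : X = X') (f : X' ⟶ Y) (g : Y ⟶ Z)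
    (h : Z ⟶ X'⟦(1 : ℤ)⟧) :
    Triangle.mk (eqToHom e ≫ f) g (h ≫ (shiftFunctor C (1 : ℤ)).map (eqToHom e.symm)) =
      Triangle.mk f g h := by
  subst e
  simp

variable [Preadditive C] {S : Set (Triangle C)} {X Y : C → Prop} {A : C}

theorem GClass.hasResolution (hA : GClass S X Y A) : HasResolution S X Y A := by
  obtain ⟨K, P, f, g, h, hK₀, hK⟩ := hA
  exact ⟨fun n => K n, fun n => P n, fun n => f n, fun n => g n, fun n => h n, hK₀,
    fun n => hK n⟩

/- The negative half of the complete resolution, read backwards; no transport is needed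
since `Int.negSucc n + 1` reduces to `0` for `n = 0` and to `Int.negSucc (n - 1)` otherwise. -/
theorem GClass.hasCoresolution (hA : GClass S X Y A) : HasCoresolution S X Y A := by
  obtain ⟨K, P, f, g, h, rfl, hK⟩ := hA
  exact ⟨fun n => K (Int.negSucc n + 1), fun n => P (Int.negSucc n), fun n => f _,
    fun n => g _, fun n => h _, rfl, fun n => hK _⟩

theorem GClass.of_hasResolution_of_hasCoresolution (hres : HasResolution S X Y A)
    (hcores : HasCoresolution S X Y A) : GClass S X Y A := by
  obtain ⟨Kr, Gr, fr, gr, hr, hKr₀, hR⟩ := hres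
  obtain ⟨Kc, Gc, fc, gc, hc, hKc₀, hC⟩ := hcores
  let K : ℤ → C := fun
    | Int.ofNat j => Kr j
    | Int.negSucc j => Kc (j + 1)
  have hK : ∀ j : ℕ, K (Int.negSucc j + 1) = Kc j
    | 0 => hKr₀.trans hKc₀.symm
    | _ + 1 => rfl
  refine ⟨K, fun | Int.ofNat j => Gr j | Int.negSucc j => Gc j,
    fun | Int.ofNat j => fr j | Int.negSucc j => eqToHom (hK j) ≫ fc j,
    fun | Int.ofNat j => gr j | Int.negSucc j => gc j,
    fun
      | Int.ofNat j => hr j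
      | Int.negSucc j => hc j ≫ (shiftFunctor C (1 : ℤ)).map (eqToHom (hK j).symm),
    hKr₀, ?_⟩
  rintro (j | j)
  · exact hR j
  · rw [triangle_mk_eqToHom_comp]
    exact hC j

theorem gClass_iff_hasResolution_and_hasCoresolution :
    GClass S X Y A ↔ HasResolution S X Y A ∧ HasCoresolution S X Y A :=
  ⟨fun hA => ⟨hA.hasResolution, hA.hasCoresolution⟩,
    fun ⟨hres, hcores⟩ => .of_hasResolution_of_hasCoresolution hres hcores⟩

end GorensteinTriangulated

namespace GorensteinTriangulated

variable {C : Type*} [Category C] [HasZeroObject C] [HasShift C ℤ] [Preadditive C]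
  [∀ n : ℤ, (shiftFunctor C n).Additive] [Pretriangulated C]

variable [IsTriangulated C]

theorem gProjective_iff_res_and_cores_general (S : Set (Triangle C)) (A : C) :
    GProjective S A ↔
      (HasResolution S (XiProjective S) (XiProjective S) A ∧
        HasCoresolution S (XiProjective S) (XiProjective S) A) :=
  gClass_iff_hasResolution_and_hasCoresolution

theorem gProjective_iff_res_and_cores (S : Set (Triangle C))
    (hS : IsProperClass S) (hE : HasEnoughXiProjectives S) (A : C) :
    GProjective S A ↔
      (HasResolution S (XiProjective S) (XiProjective S) A ∧
        HasCoresolution S (XiProjective S) (XiProjective S) A) :=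
  gProjective_iff_res_and_cores_general S A

end GorensteinTriangulated
end

section
/- Let 𝒞 be a triangulated category and ξ a proper class of triangles in 𝒞. Then ξ is saturated with respect to base change if and only if it is saturated with respect to cobase change: in a base change diagram, whenever the third vertical triangle and the second horizontal triangle are in ξ, so is the original triangle A → B → C → ΣA; equivalently, in a cobase change diagram, whenever the second vertical and the third horizontal triangles are in ξ, so is A → B → C → ΣA. -/
open CategoryTheory CategoryTheory.Limits CategoryTheory.Pretriangulated

namespace GorensteinTriangulated

variable {C : Type*} [Category C] [HasZeroObject C] [HasShift C ℤ] [Preadditive C]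
  [∀ n : ℤ, (shiftFunctor C n).Additive] [Pretriangulated C]

/-!
Two facts about a class `S` closed under isomorphisms and cobase change do most of the work:
a distinguished triangle is determined up to isomorphism by its third morphism, and if `T` is
distinguished, `T' ∈ S` ends at `T.obj₃` and `T'.mor₂ ≫ T.mor₃ = 0`, then `T.mor₃` factors as
`T'.mor₃ ≫ c⟦1⟧'`, so `T` is (isomorphic to) the cobase change of `T'` along `c`, hence in `S`.

Cobase ⇒ base: the fibre form of the octahedron on `G → E → C` turns a base change diagram into
a cobase change diagram for the fibre `X → G → C` of `G → C`; this triangle is therefore in `S`,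
and `G → C` is killed by `T.mor₃`.

Base ⇒ cobase: the octahedron on `N → A → B` identifies the third row with the cone of `D → F`.
Cobase change of the second column along `N → A` gives `A → F₀ → F` in `S` with third morphism
`F → C → ΣA`, and the fibre form of the octahedron on `F → C → ΣA` supplies the second column
`D → F₀ → B` of a base change diagram for `T`.
-/

def HasCobaseChange (S : Set (Triangle C)) : Prop :=
  ∀ T ∈ S, ∀ {D : C} (α : T.obj₁ ⟶ D),
    ∃ (F : C) (f' : D ⟶ F) (g' : F ⟶ T.obj₃) (h' : T.obj₃ ⟶ D⟦(1 : ℤ)⟧) (β : T.obj₂ ⟶ F),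
      Triangle.mk f' g' h' ∈ S ∧ T.mor₁ ≫ β = α ≫ f' ∧ T.mor₂ = β ≫ g' ∧
      T.mor₃ ≫ (shiftFunctor C (1 : ℤ)).map α = h'

lemma nonempty_iso_of_mor₃_eq {X Y Y' Z : C} {u : X ⟶ Y} {v : Y ⟶ Z} {u' : X ⟶ Y'}
    {v' : Y' ⟶ Z} {w : Z ⟶ X⟦(1 : ℤ)⟧} (h : Triangle.mk u v w ∈ distTriang C)
    (h' : Triangle.mk u' v' w ∈ distTriang C) :
    Nonempty (Triangle.mk u v w ≅ Triangle.mk u' v' w) := by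
  obtain ⟨e, -⟩ := exists_iso_of_arrow_iso _ _ (inv_rot_of_distTriang _ h)
    (inv_rot_of_distTriang _ h') (Iso.refl _)
  exact ⟨(invRotCompRot.app _).symm ≪≫ (rotate C).mapIso e ≪≫ invRotCompRot.app _⟩

section

variable {S : Set (Triangle C)} (h_dist : S ⊆ distTriang C)
  (h_iso : ∀ T₁ T₂ : Triangle C, Nonempty (T₁ ≅ T₂) → T₁ ∈ S → T₂ ∈ S)
include h_iso

lemma mem_of_mor₃_eq {X Y Y' Z : C} {u : X ⟶ Y} {v : Y ⟶ Z} {u' : X ⟶ Y'} {v' : Y' ⟶ Z}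
    {w : Z ⟶ X⟦(1 : ℤ)⟧} (h : Triangle.mk u v w ∈ distTriang C)
    (h' : Triangle.mk u' v' w ∈ distTriang C) (hS : Triangle.mk u' v' w ∈ S) :
    Triangle.mk u v w ∈ S :=
  h_iso _ _ (nonempty_iso_of_mor₃_eq h' h) hS

include h_dist

lemma mem_of_mor₂_comp_mor₃_eq_zero (h_cobase : HasCobaseChange S) {X Y Z X' Y' : C}
    {u : X ⟶ Y} {v : Y ⟶ Z} {w : Z ⟶ X⟦(1 : ℤ)⟧} {u' : X' ⟶ Y'} {v' : Y' ⟶ Z}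
    {w' : Z ⟶ X'⟦(1 : ℤ)⟧} (h : Triangle.mk u v w ∈ distTriang C)
    (hS : Triangle.mk u' v' w' ∈ S) (hvw : v' ≫ w = 0) :
    Triangle.mk u v w ∈ S := by
  obtain ⟨g, hg⟩ := Triangle.yoneda_exact₃ _ (h_dist hS) w hvw
  obtain ⟨F, f'', g'', h'', -, hF, -, -, hh''⟩ :=
    h_cobase _ hS ((shiftFunctor C (1 : ℤ)).preimage g)
  obtain rfl : h'' = w := by rw [← hh'', hg]; simp
  exact mem_of_mor₃_eq h_iso h (h_dist hF) hF

end

variable [IsTriangulated C]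

section

variable {S : Set (Triangle C)} (h_dist : S ⊆ distTriang C)
  (h_iso : ∀ T₁ T₂ : Triangle C, Nonempty (T₁ ≅ T₂) → T₁ ∈ S → T₂ ∈ S)
  (h_cobase : HasCobaseChange S)
include h_dist h_iso h_cobase

lemma SaturatedCobase.saturatedBase (hS : SaturatedCobase S) : SaturatedBase S := by
  intro T hT M G E _ δ f' g' h' _ ε _ ζ _ hrow hcol _ _ _ hh' _
  obtain ⟨X, μ₁, μ₃, hμ⟩ := distinguished_cocone_triangle₁ (g' ≫ ε)
  let O := Triangulated.someOctahedron' rfl (h_dist hrow) (h_dist hcol) hμ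
  have hμS : Triangle.mk μ₁ (g' ≫ ε) μ₃ ∈ S := hS _ hμ T.obj₁ M E O.m₁ f' O.m₃ g' δ ε ζ
    (δ ≫ h') h' O.mem hrow hcol O.comm₁ O.comm₄.symm rfl O.comm₃ rfl
  refine mem_of_mor₂_comp_mor₃_eq_zero h_dist h_iso h_cobase hT hμS ?_
  rw [Category.assoc, ← hh']
  exact comp_distTriang_mor_zero₂₃ _ (h_dist hrow)

lemma SaturatedBase.saturatedCobase (hS : SaturatedBase S) : SaturatedCobase S := by
  intro T hT N D F ζ δ α β f' g' h' η υ hcol₁ hcol₂ hrow hζ _ _ hh' _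
  have hT' : Triangle.mk T.mor₁ T.mor₂ T.mor₃ ∈ distTriang C := hT
  let O := Triangulated.someOctahedron hζ hcol₁ hT' (h_dist hcol₂)
  have hO : Triangle.mk O.m₁ O.m₃ h' ∈ S :=
    mem_of_mor₃_eq h_iso (hh' ▸ O.mem) (h_dist hrow) hrow
  obtain ⟨F₀, p, q, r, -, hF₀, -, -, hr⟩ := h_cobase _ hcol₂ ζ
  have hr' : O.m₃ ≫ T.mor₃ = r := by rw [← hr]; exact O.comm₄.symm
  have hT_rot : Triangle.mk T.mor₂ T.mor₃ (-T.mor₁⟦(1 : ℤ)⟧') ∈ distTriang C :=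
    rot_of_distTriang _ hT
  have hF₀_rot : Triangle.mk q r (-p⟦(1 : ℤ)⟧') ∈ distTriang C :=
    rot_of_distTriang _ (h_dist hF₀)
  let O' := Triangulated.someOctahedron' hr' (h_dist hO) hT_rot hF₀_rot
  have hpβ : p ≫ O'.m₃ = T.mor₁ :=
    (shiftFunctor C (1 : ℤ)).map_injective (by simpa using O'.comm₃)
  exact hS T hT D F₀ F O'.m₁ O.m₁ p q r O'.m₃ O.m₃ (T.mor₂ ≫ h') h' O'.mem hF₀ hO
    O'.comm₁ hpβ O'.comm₄.symm hr'.symm rfl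

end

theorem saturatedBase_iff_saturatedCobase_general (S : Set (Triangle C))
    (h_dist : S ⊆ (distinguishedTriangles : Set (Triangle C)))
    (h_iso : ∀ T₁ T₂ : Triangle C, Nonempty (T₁ ≅ T₂) → T₁ ∈ S → T₂ ∈ S)
    (h_cobase : ∀ T ∈ S, ∀ {D : C} (α : T.obj₁ ⟶ D),
      ∃ (F : C) (f' : D ⟶ F) (g' : F ⟶ T.obj₃) (h' : T.obj₃ ⟶ D⟦(1 : ℤ)⟧) (β : T.obj₂ ⟶ F),
        Triangle.mk f' g' h' ∈ S ∧ T.mor₁ ≫ β = α ≫ f' ∧ T.mor₂ = β ≫ g' ∧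
        T.mor₃ ≫ (shiftFunctor C (1 : ℤ)).map α = h') :
    SaturatedBase S ↔ SaturatedCobase S :=
  ⟨SaturatedBase.saturatedCobase h_dist h_iso h_cobase,
    SaturatedCobase.saturatedBase h_dist h_iso h_cobase⟩

theorem saturatedBase_iff_saturatedCobase (S : Set (Triangle C))
    (h_dist : S ⊆ (distinguishedTriangles : Set (Triangle C)))
    (h_iso : ∀ T₁ T₂ : Triangle C, Nonempty (T₁ ≅ T₂) → T₁ ∈ S → T₂ ∈ S)
    (h_susp : ∀ T ∈ S, ∀ i : ℤ, (Triangle.shiftFunctor C i).obj T ∈ S)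
    (h_base : ∀ T ∈ S, ∀ {E : C} (ε : E ⟶ T.obj₃),
      ∃ (G : C) (f' : T.obj₁ ⟶ G) (g' : G ⟶ E) (h' : E ⟶ T.obj₁⟦(1 : ℤ)⟧) (β : G ⟶ T.obj₂),
        Triangle.mk f' g' h' ∈ S ∧ f' ≫ β = T.mor₁ ∧ g' ≫ ε = β ≫ T.mor₂ ∧ h' = ε ≫ T.mor₃)
    (h_cobase : ∀ T ∈ S, ∀ {D : C} (α : T.obj₁ ⟶ D),
      ∃ (F : C) (f' : D ⟶ F) (g' : F ⟶ T.obj₃) (h' : T.obj₃ ⟶ D⟦(1 : ℤ)⟧) (β : T.obj₂ ⟶ F),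
        Triangle.mk f' g' h' ∈ S ∧ T.mor₁ ≫ β = α ≫ f' ∧ T.mor₂ = β ≫ g' ∧
        T.mor₃ ≫ (shiftFunctor C (1 : ℤ)).map α = h') :
    SaturatedBase S ↔ SaturatedCobase S :=
  saturatedBase_iff_saturatedCobase_general S h_dist h_iso h_cobase

end GorensteinTriangulated
end
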